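/- Let H and K be finite-dimensional complex Hilbert spaces with dim(H) ≥ 2 and dim(K) < 2·dim(H). Then every additive mapping A : H → K preserving Euclidean orthogonality is complex-linear or conjugate-linear. -/

import Mathlib

/-!
Let `x ⊥ y` with `‖x‖ = ‖y‖`. For real `s, u, t, v` with `s u + t v = 0` the vectors `s x + t y` and
`u x + v y` are orthogonal, so `⟪A (s x), A (u x)⟫` depends only on `s u`. The real part of
`⟪A x, A (r x)⟫` is therefore additive in `r` and nonnegative for `r ≥ 0`, hence linear, and this
forces `A (t x) = t A x`. Orthogonality of similar combinations shows that `A (I x)` has the norm of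
`A x` and is orthogonal to it over `ℝ`. If Cauchy–Schwarz were strict for the pair `A x, A (I x)`,
it would be strict for every vector of an orthogonal basis through `x` with all norms `‖x‖` (the
pairs have the same Gram matrix), and these mutually orthogonal pairs would give `2 dim H`
independent vectors in `K`. Hence `A (I x) = ± I A x` for every `x`, and as `H` is not the union of
two proper subgroups, the sign does not depend on `x`.
-/

open scoped ComplexInnerProductSpace InnerProductSpace
open Module Complex

theorem AddMonoidHom.apply_eq_mul_apply_one_of_monotone (f : ℝ →+ ℝ) (hf : Monotone f) (r : ℝ) :
    f r = r * f 1 := by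
  have hq (q : ℚ) : f q = q * f 1 := by
    simpa [Rat.smul_def] using map_ratCast_smul f ℚ ℚ q (1 : ℝ)
  rcases (map_zero f ▸ hf zero_le_one : 0 ≤ f 1).eq_or_lt with h1 | h1
  · obtain ⟨q, hrq⟩ := exists_rat_gt r
    obtain ⟨q', hqr⟩ := exists_rat_lt r
    have hup := hf hrq.le
    have hlow := hf hqr.le
    rw [hq, ← h1, mul_zero] at hup hlow
    rw [← h1, mul_zero]
    exact le_antisymm hup hlow
  apply le_antisymm
  · rw [← div_le_iff₀ h1]
    refine le_of_forall_lt_rat_imp_le fun q hrq => ?_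
    rw [div_le_iff₀ h1, ← hq]
    exact hf hrq.le
  · rw [← le_div_iff₀ h1]
    refine le_of_forall_rat_lt_imp_le fun q hqr => ?_
    rw [le_div_iff₀ h1, ← hq]
    exact hf hqr.le

theorem AddMonoidHom.map_smul_eq_of_map_I_smul {H K : Type*} [AddCommGroup H] [Module ℂ H]
    [AddCommGroup K] [Module ℂ K] (A : H →+ K)
    (hR : ∀ (t : ℝ) x, A ((t : ℂ) • x) = (t : ℂ) • A x) {ζ : ℂ}
    (hI : ∀ x, A (I • x) = ζ • A x) (l : ℂ) (x : H) :
    A (l • x) = (l.re + l.im * ζ) • A x := by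
  have hl : l • x = (l.re : ℂ) • x + (l.im : ℂ) • (I • x) := by
    rw [smul_smul, ← add_smul, re_add_im]
  rw [hl, map_add, hR, hR, hI, smul_smul, ← add_smul]

section RCLike

variable {𝕜 E : Type*} [RCLike 𝕜] [NormedAddCommGroup E] [InnerProductSpace 𝕜 E]

theorem linearIndependent_pair_of_norm_inner_lt {u v : E} (h : ‖⟪u, v⟫_𝕜‖ < ‖u‖ * ‖v‖) :
    LinearIndependent 𝕜 ![u, v] := by
  have hu : u ≠ 0 := by rintro rfl; simp at h
  rw [LinearIndependent.pair_iff' hu]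
  rintro a rfl
  exact h.ne (by simp [inner_smul_right, norm_smul, inner_self_eq_norm_sq_to_K, sq, mul_left_comm])

theorem linearIndependent_sigma_of_inner_eq_zero {η : Type*} {κ : η → Type*}
    {f : ∀ j, κ j → E} (hindep : ∀ j, LinearIndependent 𝕜 (f j))
    (hortho : ∀ i j, i ≠ j → ∀ a b, ⟪f i a, f j b⟫_𝕜 = 0) :
    LinearIndependent 𝕜 fun p : Σ j, κ j => f p.1 p.2 := by
  refine linearIndependent_iUnion_finite hindep fun i t _ hit => Submodule.IsOrtho.disjoint ?_
  refine Submodule.isOrtho_iSup_right.2 fun j => Submodule.isOrtho_iSup_right.2 fun hj => ?_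
  rw [Submodule.isOrtho_span]
  rintro _ ⟨a, rfl⟩ _ ⟨b, rfl⟩
  exact hortho i j (fun h => hit (h ▸ hj)) a b

variable [FiniteDimensional 𝕜 E]

theorem exists_inner_eq_zero_norm_eq (h : 2 ≤ finrank 𝕜 E) (x : E) :
    ∃ y, ⟪x, y⟫_𝕜 = 0 ∧ ‖y‖ = ‖x‖ := by
  rcases eq_or_ne x 0 with rfl | hx
  · exact ⟨0, by simp⟩
  have hne : (𝕜 ∙ x)ᗮ ≠ ⊥ := by
    intro hbot
    have := Submodule.finrank_add_finrank_orthogonal (𝕜 ∙ x)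
    rw [hbot, finrank_bot, finrank_span_singleton hx] at this
    omega
  obtain ⟨v, hv, hv0⟩ := Submodule.exists_mem_ne_zero_of_ne_bot hne
  refine ⟨((‖x‖ / ‖v‖ : ℝ) : 𝕜) • v, ?_, ?_⟩
  · rw [inner_smul_right, Submodule.mem_orthogonal_singleton_iff_inner_right.1 hv, mul_zero]
  · rw [norm_smul, RCLike.norm_ofReal, abs_div, abs_norm, abs_norm,
      div_mul_cancel₀ _ (norm_ne_zero_iff.2 hv0)]

theorem exists_orthonormalBasis_norm_smul_eq {x : E} (hx : x ≠ 0) :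
    ∃ (s : Finset E) (b : OrthonormalBasis s 𝕜 E) (j : s), ((‖x‖ : ℝ) : 𝕜) • b j = x := by
  have hx' : ‖x‖ ≠ 0 := norm_ne_zero_iff.2 hx
  set u := ((‖x‖⁻¹ : ℝ) : 𝕜) • x
  have hu : Orthonormal 𝕜 ((↑) : ({u} : Set E) → E) := by
    rw [orthonormal_subsingleton_iff]
    rintro ⟨_, rfl⟩
    simp [u, norm_smul, hx']
  obtain ⟨s, b, hus, hb⟩ := hu.exists_orthonormalBasis_extension
  exact ⟨s, b, ⟨u, hus rfl⟩, by simp [hb, u, smul_smul, hx']⟩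

end RCLike

theorem eq_I_smul_or_eq_neg_I_smul_of_norm_inner_eq {K : Type*} [NormedAddCommGroup K]
    [InnerProductSpace ℂ K] {u v : K} (hnorm : ‖v‖ = ‖u‖) (hre : (⟪u, v⟫).re = 0)
    (hcs : ‖⟪u, v⟫‖ = ‖u‖ * ‖v‖) : v = I • u ∨ v = -I • u := by
  have eq_smul_of_re (ζ : ℂ) (hζ : ‖ζ‖ = 1) (h : (starRingEnd ℂ ζ * ⟪u, v⟫).re = ‖u‖ ^ 2) :
      v = ζ • u := by
    have hsq : ‖ζ • u - v‖ ^ 2 = 0 := by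
      rw [@norm_sub_sq ℂ, inner_smul_left, norm_smul, hζ, one_mul, hnorm, RCLike.re_to_complex, h]
      ring
    rw [sq_eq_zero_iff, norm_eq_zero, sub_eq_zero] at hsq
    exact hsq.symm
  have him : |(⟪u, v⟫).im| = ‖u‖ ^ 2 := by
    rw [abs_im_eq_norm.2 hre, hcs, hnorm, sq]
  rcases abs_eq (sq_nonneg ‖u‖) |>.1 him with h | h
  · exact .inl (eq_smul_of_re I (by simp) (by simp [hre, h]))
  · exact .inr (eq_smul_of_re (-I) (by simp) (by simp [hre, h]))

section Orthogonality

variable {H K : Type*} [NormedAddCommGroup H] [InnerProductSpace ℂ H]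
  [NormedAddCommGroup K] [InnerProductSpace ℂ K]

def PreservesOrthogonality (A : H → K) : Prop :=
  ∀ x y, ⟪x, y⟫ = 0 → ⟪A x, A y⟫ = 0

namespace PreservesOrthogonality

variable {A : H →+ K}

theorem inner_map_add_inner_map_eq_zero (hA : PreservesOrthogonality A) {a b c d : H}
    (had : ⟪a, d⟫ = 0) (hbc : ⟪b, c⟫ = 0) (h : ⟪a + b, c + d⟫ = 0) :
    ⟪A a, A c⟫ + ⟪A b, A d⟫ = 0 := by
  have := hA _ _ h
  rw [map_add, map_add, inner_add_left, inner_add_right, inner_add_right, hA _ _ had,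
    hA _ _ hbc] at this
  linear_combination this

variable {x y : H}

theorem inner_map_smul_eq_of_orthogonal (hA : PreservesOrthogonality A) (hxy : ⟪x, y⟫ = 0)
    (hnorm : ‖x‖ = ‖y‖) (μ ν : ℂ) :
    ⟪A (μ • x), A (ν • x)⟫ = ⟪A (μ • y), A (ν • y)⟫ := by
  have hyx : ⟪y, x⟫ = 0 := inner_eq_zero_symm.1 hxy
  have h := hA.inner_map_add_inner_map_eq_zero (a := μ • x) (b := μ • y) (c := ν • x)
    (d := -(ν • y)) (by simp [inner_smul_left, inner_smul_right, hxy]) (by simp [hyx])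
    (by simp [inner_add_left, inner_smul_left, inner_smul_right, hxy, hyx,
      inner_self_eq_norm_sq_to_K, hnorm]; ring)
  rw [map_neg, inner_neg_right] at h
  linear_combination h

theorem norm_map_eq_of_orthogonal (hA : PreservesOrthogonality A) (hxy : ⟪x, y⟫ = 0)
    (hnorm : ‖x‖ = ‖y‖) : ‖A x‖ = ‖A y‖ := by
  have h := hA.inner_map_smul_eq_of_orthogonal hxy hnorm 1 1
  simp only [one_smul, inner_self_eq_norm_sq_to_K] at h
  exact (pow_left_inj₀ (norm_nonneg _) (norm_nonneg _) two_ne_zero).1 (by exact_mod_cast h)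

theorem norm_map_I_smul_of_orthogonal (hA : PreservesOrthogonality A) (hxy : ⟪x, y⟫ = 0)
    (hnorm : ‖x‖ = ‖y‖) : ‖A (I • x)‖ = ‖A x‖ :=
  (hA.norm_map_eq_of_orthogonal (x := I • x) (by simp [hxy])
    (by rw [norm_smul, norm_I, one_mul, hnorm])).trans (hA.norm_map_eq_of_orthogonal hxy hnorm).symm

theorem re_inner_map_map_I_smul_of_orthogonal (hA : PreservesOrthogonality A)
    (hxy : ⟪x, y⟫ = 0) (hnorm : ‖x‖ = ‖y‖) : (⟪A x, A (I • x)⟫).re = 0 := by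
  have hyx : ⟪y, x⟫ = 0 := inner_eq_zero_symm.1 hxy
  have h := hA.inner_map_add_inner_map_eq_zero (a := x) (b := I • y) (c := I • x) (d := y) hxy
    (by simp [hyx]) (by simp [hxy, hyx, inner_self_eq_norm_sq_to_K, hnorm]; ring)
  have h' := hA.inner_map_smul_eq_of_orthogonal hxy hnorm I 1
  rw [one_smul, one_smul, ← inner_conj_symm] at h'
  rw [← h', add_conj, ofReal_eq_zero] at h
  linarith

theorem inner_map_ofReal_smul_of_orthogonal (hA : PreservesOrthogonality A)
    (hxy : ⟪x, y⟫ = 0) (hnorm : ‖x‖ = ‖y‖) (s u : ℝ) :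
    ⟪A ((s : ℂ) • x), A ((u : ℂ) • x)⟫ = ⟪A x, A (((s * u : ℝ) : ℂ) • x)⟫ := by
  have hyx : ⟪y, x⟫ = 0 := inner_eq_zero_symm.1 hxy
  have key (s u t v : ℝ) (h : s * u + t * v = 0) :
      ⟪A ((s : ℂ) • x), A ((u : ℂ) • x)⟫ + ⟪A ((t : ℂ) • y), A ((v : ℂ) • y)⟫ = 0 := by
    refine hA.inner_map_add_inner_map_eq_zero (by simp [hxy]) (by simp [hyx]) ?_
    simp only [inner_add_left, inner_add_right, inner_smul_left, inner_smul_right, hxy, hyx,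
      inner_self_eq_norm_sq_to_K, hnorm, conj_ofReal]
    have h' : (s : ℂ) * u + t * v = 0 := by exact_mod_cast h
    linear_combination (‖y‖ : ℂ) ^ 2 * h'
  have h1 := key s u 1 (-(s * u)) (by ring)
  have h2 := key 1 (s * u) 1 (-(s * u)) (by ring)
  rw [ofReal_one, one_smul] at h2
  linear_combination h1 - h2

theorem map_ofReal_smul_of_orthogonal (hA : PreservesOrthogonality A) (hxy : ⟪x, y⟫ = 0)
    (hnorm : ‖x‖ = ‖y‖) (t : ℝ) : A ((t : ℂ) • x) = (t : ℂ) • A x := by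
  let f : ℝ →+ ℝ :=
    { toFun := fun r => (⟪A x, A ((r : ℂ) • x)⟫).re
      map_zero' := by simp
      map_add' := fun r r' => by simp [add_smul] }
  have hf (r : ℝ) : f r = (⟪A x, A ((r : ℂ) • x)⟫).re := rfl
  have hsq (r : ℝ) : f (r * r) = ‖A ((r : ℂ) • x)‖ ^ 2 := by
    rw [hf, ← hA.inner_map_ofReal_smul_of_orthogonal hxy hnorm, inner_self_eq_norm_sq_to_K]
    norm_cast
  have hmono : Monotone f := (monotone_iff_map_nonneg f).2 fun r hr => by
    rw [← Real.mul_self_sqrt hr, hsq]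
    positivity
  have hlin := f.apply_eq_mul_apply_one_of_monotone hmono
  have h1 := hsq 1
  rw [ofReal_one, one_smul, mul_one] at h1
  have hzero : ‖A ((t : ℂ) • x) - (t : ℂ) • A x‖ ^ 2 = 0 := by
    rw [@norm_sub_sq ℂ, inner_smul_right, norm_smul, norm_real, mul_pow, ← hsq, ← h1, hlin,
      ← inner_conj_symm, RCLike.re_to_complex, re_ofReal_mul, conj_re, ← hf, hlin t,
      Real.norm_eq_abs, sq_abs]
    ring
  rw [sq_eq_zero_iff, norm_eq_zero, sub_eq_zero] at hzero
  exact hzero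

theorem map_ofReal_smul [FiniteDimensional ℂ H] (hA : PreservesOrthogonality A)
    (h : 2 ≤ finrank ℂ H) (t : ℝ) (x : H) : A ((t : ℂ) • x) = (t : ℂ) • A x := by
  obtain ⟨y, hxy, hnorm⟩ := exists_inner_eq_zero_norm_eq h x
  exact hA.map_ofReal_smul_of_orthogonal hxy hnorm.symm t

theorem norm_inner_map_map_I_smul_eq [FiniteDimensional ℂ K] (hA : PreservesOrthogonality A)
    {ι : Type*} [Fintype ι] {f : ι → H} (hf : Pairwise fun j k => ⟪f j, f k⟫ = 0)
    (hnorm : ∀ j k, ‖f j‖ = ‖f k‖) (hcard : finrank ℂ K < 2 * Fintype.card ι) (j : ι) :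
    ‖⟪A (f j), A (I • f j)⟫‖ = ‖A (f j)‖ * ‖A (I • f j)‖ := by
  refine (norm_inner_le_norm _ _).antisymm (not_lt.1 fun hlt => hcard.not_ge ?_)
  have hstrict (k : ι) : ‖⟪A (f k), A (I • f k)⟫‖ < ‖A (f k)‖ * ‖A (I • f k)‖ := by
    rcases eq_or_ne k j with rfl | hkj
    · exact hlt
    have hinner : ⟪A (f k), A (I • f k)⟫ = ⟪A (f j), A (I • f j)⟫ := by
      simpa using hA.inner_map_smul_eq_of_orthogonal (hf hkj) (hnorm k j) 1 I
    have hnorm_I : ‖A (I • f k)‖ = ‖A (I • f j)‖ :=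
      hA.norm_map_eq_of_orthogonal (by simp [hf hkj]) (by simp [norm_smul, hnorm k j])
    rwa [hinner, hA.norm_map_eq_of_orthogonal (hf hkj) (hnorm k j), hnorm_I]
  let g : ι → Fin 2 → K := fun k => ![A (f k), A (I • f k)]
  have hortho : ∀ i k, i ≠ k → ∀ a b, ⟪g i a, g k b⟫ = 0 := by
    intro i k hik a b
    fin_cases a <;> fin_cases b <;> apply hA <;> simp [hf hik]
  have := (linearIndependent_sigma_of_inner_eq_zero
    (fun k => linearIndependent_pair_of_norm_inner_lt (hstrict k)) hortho).fintype_card_le_finrank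
  simpa [Fintype.card_sigma, mul_comm] using this

variable [FiniteDimensional ℂ H] [FiniteDimensional ℂ K]

theorem map_I_smul_eq_or (hA : PreservesOrthogonality A) (hH : 2 ≤ finrank ℂ H)
    (hK : finrank ℂ K < 2 * finrank ℂ H) (x : H) :
    A (I • x) = I • A x ∨ A (I • x) = -I • A x := by
  rcases eq_or_ne x 0 with rfl | hx
  · simp
  obtain ⟨y, hxy, hnorm⟩ := exists_inner_eq_zero_norm_eq hH x
  refine eq_I_smul_or_eq_neg_I_smul_of_norm_inner_eq
    (hA.norm_map_I_smul_of_orthogonal hxy hnorm.symm)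
    (hA.re_inner_map_map_I_smul_of_orthogonal hxy hnorm.symm) ?_
  obtain ⟨s, b, j, hj⟩ := exists_orthonormalBasis_norm_smul_eq (𝕜 := ℂ) hx
  rw [← hj]
  refine hA.norm_inner_map_map_I_smul_eq (f := fun k => ((‖x‖ : ℝ) : ℂ) • b k)
    (fun k k' hkk' => ?_) (fun k k' => ?_) ?_ j
  · simp [b.orthonormal.2 hkk']
  · simp [norm_smul, b.orthonormal.1]
  · rwa [← finrank_eq_card_basis b.toBasis]

theorem forall_map_I_smul_eq_or (hA : PreservesOrthogonality A) (hH : 2 ≤ finrank ℂ H)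
    (hK : finrank ℂ K < 2 * finrank ℂ H) :
    (∀ x, A (I • x) = I • A x) ∨ ∀ x, A (I • x) = -I • A x := by
  let S (ζ : ℂ) : AddSubgroup H := (A.comp (I • AddMonoidHom.id H)).eqLocus (ζ • A)
  have := (AddSubgroupClass.subset_union (H := (⊤ : AddSubgroup H)) (K := S I)
    (L := S (-I))).1 fun x _ => hA.map_I_smul_eq_or hH hK x
  exact this.imp (fun h x => h (AddSubgroup.mem_top x)) fun h x => h (AddSubgroup.mem_top x)

end PreservesOrthogonality

end Orthogonality

/-- If `H` and `K` are finite-dimensional complex Hilbert spaces with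
`2 ≤ dim H` and `dim K < 2 dim H`, then every additive orthogonality preserving
map `A : H → K` is complex-linear or conjugate-linear. -/
theorem additive_op_finiteDimensional_is_linear_or_conjugateLinear
    {H K : Type*} [NormedAddCommGroup H] [InnerProductSpace ℂ H]
    [NormedAddCommGroup K] [InnerProductSpace ℂ K]
    [FiniteDimensional ℂ H] [FiniteDimensional ℂ K]
    (hdimH : 2 ≤ Module.finrank ℂ H)
    (hdimK : Module.finrank ℂ K < 2 * Module.finrank ℂ H)
    (A : H → K)
    (hadd : ∀ x y, A (x + y) = A x + A y)
    (hop : ∀ x y : H, ⟪x, y⟫ = 0 → ⟪A x, A y⟫ = 0) :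
    (∀ (l : ℂ) (x : H), A (l • x) = l • A x) ∨
      (∀ (l : ℂ) (x : H), A (l • x) = (starRingEnd ℂ l) • A x) := by
  obtain ⟨A, rfl⟩ : ∃ B : H →+ K, ⇑B = A := ⟨AddMonoidHom.mk' A hadd, rfl⟩
  have hR := PreservesOrthogonality.map_ofReal_smul hop hdimH
  refine (PreservesOrthogonality.forall_map_I_smul_eq_or hop hdimH hdimK).imp
    (fun hI l x => ?_) fun hI l x => ?_
  · rw [A.map_smul_eq_of_map_I_smul hR hI, re_add_im]
  · have hconj : (l.re : ℂ) + l.im * -I = starRingEnd ℂ l := by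
      apply Complex.ext <;> simp
    rw [A.map_smul_eq_of_map_I_smul hR hI, hconj]
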